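/- arXiv:1704.05288 — 5 statements merged into one kernel-verified Lean document; each statement's English description precedes it below -/
import Mathlib

section
/- (Green's Lemma for Γ-semigroups) Let a and b be 𝓡-equivalent elements of a Γ-semigroup G with a ≠ b, and let s, s' ∈ G and γ, μ ∈ Γ be such that aγs = b and bμs' = a. Then the maps σ : (a)_𝓛 → (b)_𝓛, x ↦ xγs, and σ' : (b)_𝓛 → (a)_𝓛, x ↦ xμs', are well defined and mutually inverse, so σ is a one-to-one map of (a)_𝓛 onto (b)_𝓛 and σ' is a one-to-one map of (b)_𝓛 onto (a)_𝓛. Moreover, if x ∈ (a)_𝓛 then (xγs, x) ∈ 𝓡, and if x ∈ (b)_𝓛 then (xμs', x) ∈ 𝓡. -/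
/-- Associativity condition making `mul : M → Γ → M → M` a Γ-semigroup structure:
`(aγb)μc = aγ(bμc)` for all `a b c ∈ M`, `γ μ ∈ Γ`. -/
def GammaAssoc {M Γ : Type*} (mul : M → Γ → M → M) : Prop :=
  ∀ (a b c : M) (γ μ : Γ), mul (mul a γ b) μ c = mul a γ (mul b μ c)

/-- Green's relation 𝓡 on a Γ-semigroup. -/
def GreenR {M Γ : Type*} (mul : M → Γ → M → M) (a b : M) : Prop :=
  a = b ∨ ∃ (x y : M) (γ μ : Γ), mul a γ x = b ∧ mul b μ y = a

/-- Green's relation 𝓛 on a Γ-semigroup. -/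
def GreenL {M Γ : Type*} (mul : M → Γ → M → M) (a b : M) : Prop :=
  a = b ∨ ∃ (x y : M) (γ μ : Γ), mul x γ a = b ∧ mul y μ b = a

/-- The 𝓡-class of `a`. -/
def Rclass {M Γ : Type*} (mul : M → Γ → M → M) (a : M) : Set M :=
  {x | GreenR mul x a}

/-- The 𝓛-class of `a`. -/
def Lclass {M Γ : Type*} (mul : M → Γ → M → M) (a : M) : Set M :=
  {x | GreenL mul x a}

/-- A right ideal of a Γ-semigroup: a nonempty subset `A` with `AΓG ⊆ A`. -/
def IsRightIdeal {M Γ : Type*} (mul : M → Γ → M → M) (A : Set M) : Prop :=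
  A.Nonempty ∧ ∀ a ∈ A, ∀ (γ : Γ) (x : M), mul a γ x ∈ A

/-- A left ideal of a Γ-semigroup: a nonempty subset `A` with `GΓA ⊆ A`. -/
def IsLeftIdeal {M Γ : Type*} (mul : M → Γ → M → M) (A : Set M) : Prop :=
  A.Nonempty ∧ ∀ a ∈ A, ∀ (γ : Γ) (x : M), mul x γ a ∈ A

/-- The set `{a} ∪ aΓG`. -/
def Rgen {M Γ : Type*} (mul : M → Γ → M → M) (a : M) : Set M :=
  {a} ∪ {b | ∃ (γ : Γ) (x : M), mul a γ x = b}

/-- The set `{a} ∪ GΓa`. -/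
def Lgen {M Γ : Type*} (mul : M → Γ → M → M) (a : M) : Set M :=
  {a} ∪ {b | ∃ (γ : Γ) (x : M), mul x γ a = b}

/-- Green's Lemma for Γ-semigroups. -/
theorem greens_lemma {M Γ : Type*} [Nonempty M] [Nonempty Γ]
    (mul : M → Γ → M → M) (assoc : GammaAssoc mul)
    (a b s s' : M) (γ μ : Γ)
    (hR : GreenR mul a b) (hne : a ≠ b)
    (hb : mul a γ s = b) (ha : mul b μ s' = a) :
    Set.MapsTo (fun x => mul x γ s) (Lclass mul a) (Lclass mul b) ∧
    Set.MapsTo (fun y => mul y μ s') (Lclass mul b) (Lclass mul a) ∧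
    (∀ x ∈ Lclass mul a, mul (mul x γ s) μ s' = x) ∧
    (∀ y ∈ Lclass mul b, mul (mul y μ s') γ s = y) ∧
    Set.BijOn (fun x => mul x γ s) (Lclass mul a) (Lclass mul b) ∧
    Set.BijOn (fun y => mul y μ s') (Lclass mul b) (Lclass mul a) ∧
    (∀ x ∈ Lclass mul a, GreenR mul (mul x γ s) x) ∧
    (∀ x ∈ Lclass mul b, GreenR mul (mul x μ s') x) := by
  -- key cancellation identities
  have key1 : ∀ x ∈ Lclass mul a, mul (mul x γ s) μ s' = x := by
    intro x hx
    rcases hx with h | ⟨p, q, γ', μ', hp, hq⟩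
    · subst h; rw [hb, ha]
    · rw [← hq, assoc q a s μ' γ, hb, assoc q b s' μ' μ, ha]
  have key2 : ∀ y ∈ Lclass mul b, mul (mul y μ s') γ s = y := by
    intro y hy
    rcases hy with h | ⟨p, q, γ', μ', hp, hq⟩
    · subst h; rw [ha, hb]
    · rw [← hq, assoc q b s' μ' μ, ha, assoc q a s μ' γ, hb]
  have maps1 : Set.MapsTo (fun x => mul x γ s) (Lclass mul a) (Lclass mul b) := by
    intro x hx
    rcases hx with h | ⟨p, q, γ', μ', hp, hq⟩
    · subst h; exact Or.inl hb
    · exact Or.inr ⟨p, q, γ', μ', by rw [← assoc, hp, hb], by rw [← hb, ← assoc, hq]⟩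
  have maps2 : Set.MapsTo (fun y => mul y μ s') (Lclass mul b) (Lclass mul a) := by
    intro y hy
    rcases hy with h | ⟨p, q, γ', μ', hp, hq⟩
    · subst h; exact Or.inl ha
    · exact Or.inr ⟨p, q, γ', μ', by rw [← assoc, hp, ha], by rw [← ha, ← assoc, hq]⟩
  have inv : Set.InvOn (fun y => mul y μ s') (fun x => mul x γ s)
      (Lclass mul a) (Lclass mul b) := ⟨fun x hx => key1 x hx, fun y hy => key2 y hy⟩
  refine ⟨maps1, maps2, key1, key2, inv.bijOn maps1 maps2, inv.symm.bijOn maps2 maps1,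
    ?_, ?_⟩
  · intro x hx
    exact Or.inr ⟨s', s, μ, γ, key1 x hx, rfl⟩
  · intro y hy
    exact Or.inr ⟨s, s', γ, μ, key2 y hy, rfl⟩
end

section
/- Let G be a Γ-semigroup, a, b, c, s, s', t, t' ∈ G and γ, μ, ρ, ζ ∈ Γ with aγs = b, bμs' = a, tρb = c and t'ζc = b. Then for every x ∈ (a)_𝓡 ∩ (a)_𝓛 the element tρxγs belongs to (c)_𝓡 ∩ (c)_𝓛; that is, the map σ : (a)_𝓡 ∩ (a)_𝓛 → (c)_𝓡 ∩ (c)_𝓛, x ↦ tρxγs, is well defined. -/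
/-- The map `σ : (a)_𝓡 ∩ (a)_𝓛 → (c)_𝓡 ∩ (c)_𝓛, x ↦ tρxγs` is well defined. -/
theorem sigma_well_defined {M Γ : Type*} [Nonempty M] [Nonempty Γ]
    (mul : M → Γ → M → M) (assoc : GammaAssoc mul)
    (a b c s s' t t' : M) (γ μ ρ ζ : Γ)
    (h1 : mul a γ s = b) (h2 : mul b μ s' = a)
    (h3 : mul t ρ b = c) (h4 : mul t' ζ c = b) :
    ∀ x ∈ Rclass mul a ∩ Lclass mul a,
      mul (mul t ρ x) γ s ∈ Rclass mul c ∩ Lclass mul c := by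
  rintro x ⟨hR, hL⟩
  have key : mul (mul t ρ a) γ s = c := by rw [assoc, h1, h3]
  rcases hR with rfl | ⟨u, v, α, β, hu, hv⟩
  · exact ⟨Or.inl key, Or.inl key⟩
  rcases hL with rfl | ⟨p, q, α', β', hp, hq⟩
  · exact ⟨Or.inl key, Or.inl key⟩
  have e1 : mul t' ζ (mul t ρ a) = a := by
    rw [← h2, ← assoc t b s' ρ μ, h3, ← assoc t' c s' ζ μ, h4]
  have e2 : mul c μ s' = mul t ρ a := by
    rw [← h3, assoc t b s' ρ μ, h2]
  have fact1 : mul (mul x γ s) μ s' = x := by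
    rw [← hq, assoc q a s β' γ, h1, assoc q b s' β' μ, h2]
  have fact2 : mul t' ζ (mul t ρ x) = x := by
    rw [← hv, ← assoc t a v ρ β, ← assoc t' (mul t ρ a) v ζ β, e1]
  have f3 : mul (mul (mul t ρ x) γ s) μ s' = mul t ρ x := by
    rw [assoc t x s ρ γ, assoc t (mul x γ s) s' ρ μ, fact1]
  refine ⟨Or.inr ⟨mul s' α (mul u γ s), mul s' β (mul v γ s), μ, μ, ?_, ?_⟩,
    Or.inr ⟨mul (mul t ρ p) α' t', mul (mul t ρ q) β' t', ζ, ζ, ?_, ?_⟩⟩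
  · rw [← assoc (mul (mul t ρ x) γ s) s' (mul u γ s) μ α, f3,
      assoc t x (mul u γ s) ρ α, ← assoc x u s α γ, hu, h1, h3]
  · rw [← assoc c s' (mul v γ s) μ β, e2, assoc t a (mul v γ s) ρ β,
      ← assoc a v s β γ, hv, ← assoc t x s ρ γ]
  · rw [assoc (mul t ρ p) t' (mul (mul t ρ x) γ s) α' ζ,
      ← assoc t' (mul t ρ x) s ζ γ, fact2, assoc t p (mul x γ s) ρ α',
      ← assoc p x s α' γ, hp, h1, h3]
  · rw [assoc (mul t ρ q) t' c β' ζ, h4, assoc t q b ρ β', ← h1,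
      ← assoc q a s β' γ, hq, ← assoc t x s ρ γ]
end

section
/- Let G be a Γ-semigroup, a, b, c, s, s', t, t' ∈ G and γ, μ, ρ, ζ ∈ Γ with aγs = b, bμs' = a, tρb = c and t'ζc = b. Then for every x ∈ (c)_𝓡 ∩ (c)_𝓛 the element t'ζxμs' belongs to (a)_𝓡 ∩ (a)_𝓛; that is, the map σ' : (c)_𝓡 ∩ (c)_𝓛 → (a)_𝓡 ∩ (a)_𝓛, x ↦ t'ζxμs', is well defined. -/
theorem greenR_trans {M Γ : Type*} {mul : M → Γ → M → M} (assoc : GammaAssoc mul)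
    {a b c : M} (h1 : GreenR mul a b) (h2 : GreenR mul b c) : GreenR mul a c := by
  rcases h1 with rfl | ⟨x1, y1, g1, m1, hx1, hy1⟩
  · exact h2
  rcases h2 with rfl | ⟨x2, y2, g2, m2, hx2, hy2⟩
  · exact Or.inr ⟨x1, y1, g1, m1, hx1, hy1⟩
  refine Or.inr ⟨mul x1 g2 x2, mul y2 m1 y1, g1, m2, ?_, ?_⟩
  · rw [← assoc, hx1, hx2]
  · rw [← assoc, hy2, hy1]

theorem greenL_trans {M Γ : Type*} {mul : M → Γ → M → M} (assoc : GammaAssoc mul)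
    {a b c : M} (h1 : GreenL mul a b) (h2 : GreenL mul b c) : GreenL mul a c := by
  rcases h1 with rfl | ⟨x1, y1, g1, m1, hx1, hy1⟩
  · exact h2
  rcases h2 with rfl | ⟨x2, y2, g2, m2, hx2, hy2⟩
  · exact Or.inr ⟨x1, y1, g1, m1, hx1, hy1⟩
  refine Or.inr ⟨mul x2 g2 x1, mul y1 m1 y2, g1, m2, ?_, ?_⟩
  · rw [assoc, hx1, hx2]
  · rw [assoc, hy2, hy1]

/-- The map `σ' : (c)_𝓡 ∩ (c)_𝓛 → (a)_𝓡 ∩ (a)_𝓛, x ↦ t'ζxμs'` is well defined. -/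
theorem sigma'_well_defined {M Γ : Type*} [Nonempty M] [Nonempty Γ]
    (mul : M → Γ → M → M) (assoc : GammaAssoc mul)
    (a b c s s' t t' : M) (γ μ ρ ζ : Γ)
    (h1 : mul a γ s = b) (h2 : mul b μ s' = a)
    (h3 : mul t ρ b = c) (h4 : mul t' ζ c = b) :
    ∀ x ∈ Rclass mul c ∩ Lclass mul c,
      mul (mul t' ζ x) μ s' ∈ Rclass mul a ∩ Lclass mul a := by
  intro x hx
  obtain ⟨hR, hL⟩ := hx
  simp only [Rclass, Lclass, Set.mem_setOf_eq] at hR hL ⊢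
  -- w' = t'ζx
  set w' : M := mul t' ζ x with hw'
  -- w' R b
  have hw'Rb : GreenR mul w' b := by
    rcases hR with rfl | ⟨u, v, α, β, hu, hv⟩
    · exact Or.inl h4
    · refine Or.inr ⟨u, v, α, β, ?_, ?_⟩
      · rw [hw', assoc, hu, h4]
      · rw [← h4, assoc, hv]
  -- tρw' = x
  have hinv : mul t ρ w' = x := by
    show mul t ρ (mul t' ζ x) = x
    rcases hR with rfl | ⟨u, v, α, β, hu, hv⟩
    · rw [h4, h3]
    · rw [← hv, ← assoc t' c v, h4, ← assoc, h3]
  -- w' L x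
  have hw'Lx : GreenL mul w' x := Or.inr ⟨t, t', ρ, ζ, hinv, rfl⟩
  -- c L b
  have hcLb : GreenL mul c b := Or.inr ⟨t', t, ζ, ρ, h4, h3⟩
  have hw'Lb : GreenL mul w' b := greenL_trans assoc (greenL_trans assoc hw'Lx hL) hcLb
  -- w = w'μs'
  -- w L a
  have hwLa : GreenL mul (mul w' μ s') a := by
    rcases hw'Lb with h | ⟨p, q, δ, ε, hp, hq⟩
    · rw [h]; exact Or.inl h2
    · refine Or.inr ⟨p, q, δ, ε, ?_, ?_⟩
      · rw [← assoc, hp, h2]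
      · rw [← h2, ← assoc, hq]
  -- wγs = w'
  have hinv2 : mul (mul w' μ s') γ s = w' := by
    rcases hw'Lb with h | ⟨p, q, δ, ε, hp, hq⟩
    · rw [h, h2, h1]
    · rw [← hq, assoc, assoc, ← assoc b, h2, h1]
  have hwRw' : GreenR mul (mul w' μ s') w' := Or.inr ⟨s, s', γ, μ, hinv2, rfl⟩
  have hbRa : GreenR mul b a := Or.inr ⟨s', s, μ, γ, h2, h1⟩
  have hwRa : GreenR mul (mul w' μ s') a :=
    greenR_trans assoc (greenR_trans assoc hwRw' hw'Rb) hbRa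
  exact ⟨hwRa, hwLa⟩
end

section
/- Let G be a Γ-semigroup, a, b, c, s, s', t, t' ∈ G and γ, μ, ρ, ζ ∈ Γ with aγs = b, bμs' = a, tρb = c and t'ζc = b. Then for every d ∈ (a)_𝓡 ∩ (a)_𝓛 one has t'ζ(tρdγs)μs' = d; that is, the composite σ' ∘ σ of the maps σ : x ↦ tρxγs and σ' : x ↦ t'ζxμs' is the identity map on (a)_𝓡 ∩ (a)_𝓛. -/
/-- `σ' ∘ σ` is the identity on `(a)_𝓡 ∩ (a)_𝓛`: `t'ζ(tρdγs)μs' = d`. -/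
theorem sigma'_comp_sigma_id {M Γ : Type*} [Nonempty M] [Nonempty Γ]
    (mul : M → Γ → M → M) (assoc : GammaAssoc mul)
    (a b c s s' t t' : M) (γ μ ρ ζ : Γ)
    (h1 : mul a γ s = b) (h2 : mul b μ s' = a)
    (h3 : mul t ρ b = c) (h4 : mul t' ζ c = b) :
    ∀ d ∈ Rclass mul a ∩ Lclass mul a,
      mul (mul t' ζ (mul (mul t ρ d) γ s)) μ s' = d := by
  intro d hd
  obtain ⟨hR, hL⟩ := hd
  have hta : mul t' ζ (mul t ρ a) = a := by
    rw [← h2, ← assoc t b s' ρ μ, h3, ← assoc t' c s' ζ μ, h4]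
  have htd : mul t' ζ (mul t ρ d) = d := by
    rcases hR with rfl | ⟨x, y, γ', μ', hx, hy⟩
    · exact hta
    · rw [← hy, ← assoc t a y ρ μ', ← assoc t' (mul t ρ a) y ζ μ', hta]
  have hds : mul (mul d γ s) μ s' = d := by
    rcases hL with rfl | ⟨x, y, γ', μ', hx, hy⟩
    · rw [h1, h2]
    · rw [← hy, assoc y a s μ' γ, h1, assoc y b s' μ' μ, h2]
  rw [← assoc t' (mul t ρ d) s ζ γ, htd, hds]
end

section
/- Let G be a Γ-semigroup, a, b, c, s, s', t, t' ∈ G and γ, μ, ρ, ζ ∈ Γ with aγs = b, bμs' = a, tρb = c and t'ζc = b. Then for every d ∈ (c)_𝓡 ∩ (c)_𝓛 one has tρ(t'ζdμs')γs = d; that is, the composite σ ∘ σ' of the maps σ' : x ↦ t'ζxμs' and σ : x ↦ tρxγs is the identity map on (c)_𝓡 ∩ (c)_𝓛. -/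
/-- `σ ∘ σ'` is the identity on `(c)_𝓡 ∩ (c)_𝓛`: `tρ(t'ζdμs')γs = d`. -/
theorem sigma_comp_sigma'_id {M Γ : Type*} [Nonempty M] [Nonempty Γ]
    (mul : M → Γ → M → M) (assoc : GammaAssoc mul)
    (a b c s s' t t' : M) (γ μ ρ ζ : Γ)
    (h1 : mul a γ s = b) (h2 : mul b μ s' = a)
    (h3 : mul t ρ b = c) (h4 : mul t' ζ c = b) :
    ∀ d ∈ Rclass mul c ∩ Lclass mul c,
      mul (mul t ρ (mul (mul t' ζ d) μ s')) γ s = d := by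
  rintro d ⟨hR, hL⟩
  have hc : mul (mul c μ s') γ s = c := by
    rw [← h3, assoc t b s' ρ μ, h2, assoc t a s ρ γ, h1]
  have key1 : mul (mul d μ s') γ s = d := by
    rcases hL with hdc | ⟨x, y, γ₁, μ₁, hx, hy⟩
    · rw [hdc, hc]
    · rw [← hy, assoc y c s' μ₁ μ, assoc y (mul c μ s') s μ₁ γ, hc]
  have key2 : mul t ρ (mul t' ζ d) = d := by
    rcases hR with hdc | ⟨x, y, γ₁, μ₁, hx, hy⟩
    · rw [hdc, h4, h3]
    · rw [← hy, ← assoc t' c y ζ μ₁, h4, ← assoc t b y ρ μ₁, h3]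
  rw [assoc t (mul (mul t' ζ d) μ s') s ρ γ,
      assoc (mul t' ζ d) s' s μ γ,
      assoc t' d (mul s' γ s) ζ μ,
      ← assoc d s' s μ γ, key1, key2]
end
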